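/- Let f : A → B be an n-homomorphism. Then for every a ∈ A the f-Berezinian ber_f(a) := Σ_{k=0}^{n} ψ_k(f, a−1) equals ψ_n(f,a). -/

import Mathlib

open PowerSeries

noncomputable def logOneAdd {A : Type*} [CommRing A] [Algebra ℚ A] (a : A) : PowerSeries A :=
  PowerSeries.mk fun k => ((-1 : ℚ) ^ (k + 1) / k) • a ^ k

noncomputable def mapCoeff {A B : Type*} [CommRing A] [CommRing B] [Algebra ℚ A] [Algebra ℚ B]
    (f : A →ₗ[ℚ] B) (p : PowerSeries A) : PowerSeries B :=
  PowerSeries.mk fun k => f (PowerSeries.coeff k p)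

noncomputable def expPS {B : Type*} [CommRing B] [Algebra ℚ B] (p : PowerSeries B) : PowerSeries B :=
  PowerSeries.mk fun k => ∑ m ∈ Finset.range (k + 1),
    ((m.factorial : ℚ)⁻¹) • PowerSeries.coeff k (p ^ m)

noncomputable def charFun {A B : Type*} [CommRing A] [CommRing B] [Algebra ℚ A] [Algebra ℚ B]
    (f : A →ₗ[ℚ] B) (a : A) : PowerSeries B :=
  expPS (mapCoeff f (logOneAdd a))

noncomputable def psi {A B : Type*} [CommRing A] [CommRing B] [Algebra ℚ A] [Algebra ℚ B]
    (f : A →ₗ[ℚ] B) (a : A) (k : ℕ) : B :=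
  PowerSeries.coeff k (charFun f a)

def IsNHom {A B : Type*} [CommRing A] [CommRing B] [Algebra ℚ A] [Algebra ℚ B]
    (f : A →ₗ[ℚ] B) (n : ℕ) : Prop :=
  f 1 = n • (1 : B) ∧ ∀ k, n + 1 ≤ k → ∀ a : A, psi f a k = 0

noncomputable def frob {A B : Type*} [CommRing A] [CommRing B] [Algebra ℚ A] [Algebra ℚ B]
    (f : A →ₗ[ℚ] B) : (k : ℕ) → (Fin k → A) → B
  | 0, _ => 1
  | k + 1, a =>
      f (a (Fin.last k)) * frob f k (fun i => a i.castSucc)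
        - ∑ i : Fin k, frob f k
            (Function.update (fun j : Fin k => a j.castSucc) i (a i.castSucc * a (Fin.last k)))

/-!
Writing `S = X/(1+X)`, one has `1 + aX = (1 + X)(1 + (a-1)S)`. Since `exp` turns sums into
products and is injective on series without constant term, taking logarithms gives
`log(1+aX) = log(1+X) + log(1+(a-1)X) ∘ S` already in `A⟦X⟧`. The map `f` is only `ℚ`-linear,
but that suffices to carry this identity to `B⟦X⟧`, because `S` has rational coefficients; with
`f 1 = n` it yields `R(f,a) = (1+X)^n · R(f,a-1)(S)`. For an `n`-homomorphism `R(f,a-1)` is a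
polynomial `∑_{k ≤ n} ψ_k X^k`, and `(1+X)^n S^k = (1+X)^(n-k) X^k` has `X^n`-coefficient `1`.
-/

open Finset

attribute [local instance] IsAddTorsionFree.of_module_rat

namespace PowerSeries

variable {R : Type*} [CommRing R]

theorem coeff_pow_eq_zero_of_lt {s : R⟦X⟧} (hs : constantCoeff s = 0) {k d : ℕ} (h : k < d) :
    coeff k (s ^ d) = 0 :=
  coeff_of_lt_order k <| (Nat.cast_lt.mpr h).trans_le (le_order_pow_of_constantCoeff_eq_zero d hs)

theorem coeff_subst_eq_sum {s : R⟦X⟧} (hs : constantCoeff s = 0) (p : R⟦X⟧) (k : ℕ) :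
    coeff k (p.subst s) = ∑ d ∈ range (k + 1), coeff d p * coeff k (s ^ d) := by
  rw [coeff_subst' (HasSubst.of_constantCoeff_zero' hs)]
  refine finsum_eq_sum_of_support_subset _ fun d hd => ?_
  by_contra hdk
  simp only [coe_range, Set.mem_Iio, not_lt] at hdk
  exact hd (by simp only [coeff_pow_eq_zero_of_lt hs (show k < d by omega), smul_zero])

theorem eq_of_derivative_eq_mul [IsAddTorsionFree R] {y z w : R⟦X⟧}
    (hy : d⁄dX R y = y * w) (hz : d⁄dX R z = z * w) (h0 : constantCoeff y = constantCoeff z) :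
    y = z := by
  ext k
  induction k using Nat.strong_induction_on with
  | _ k ih =>
    cases k with
    | zero => simpa using h0
    | succ k =>
      have hlow : coeff k (y * w) = coeff k (z * w) := by
        simp only [coeff_mul]
        exact sum_congr rfl fun uv huv => by rw [ih uv.1 (Nat.antidiagonal.fst_lt huv)]
      rw [← hy, ← hz, coeff_derivative, coeff_derivative, ← Nat.cast_succ, mul_comm,
        ← nsmul_eq_mul, mul_comm, ← nsmul_eq_mul] at hlow
      exact (smul_right_inj (Nat.succ_ne_zero k)).mp hlow

theorem coeff_self_one_add_X_pow (m : ℕ) : coeff m ((1 + X : R⟦X⟧) ^ m) = 1 := by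
  rw [← Polynomial.coe_X, ← Polynomial.coe_one, ← Polynomial.coe_add, ← Polynomial.coe_pow,
    Polynomial.coeff_coe, Polynomial.coeff_one_add_X_pow, Nat.choose_self, Nat.cast_one]

variable (R) in
noncomputable def xDivOneAddX : R⟦X⟧ :=
  X * rescale (-1) (mk 1)

theorem constantCoeff_xDivOneAddX : constantCoeff (xDivOneAddX R) = 0 := by
  simp [xDivOneAddX]

theorem xDivOneAddX_mul_one_add_X : xDivOneAddX R * (1 + X) = X := by
  have h := congrArg (rescale (-1 : R)) (mk_one_mul_one_sub_eq_one (S := R))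
  simp only [map_mul, map_sub, map_one, rescale_X, map_neg, neg_one_mul, sub_neg_eq_add] at h
  rw [xDivOneAddX, mul_assoc, h, mul_one]

theorem map_xDivOneAddX {S : Type*} [CommRing S] (g : R →+* S) :
    map g (xDivOneAddX R) = xDivOneAddX S := by
  ext k
  cases k <;> simp [xDivOneAddX, coeff_succ_X_mul, coeff_rescale]

theorem coeff_one_add_X_pow_mul_subst_xDivOneAddX {n : ℕ} {Q : R⟦X⟧}
    (hQ : ∀ j, n + 1 ≤ j → coeff j Q = 0) :
    coeff n ((1 + X) ^ n * Q.subst (xDivOneAddX R)) = ∑ j ∈ range (n + 1), coeff j Q := by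
  have hQ_trunc : Q = (trunc (n + 1) Q : R⟦X⟧) := by
    ext j
    rw [Polynomial.coeff_coe, coeff_trunc]
    split_ifs with hj
    · rfl
    · exact hQ j (by omega)
  have hS : HasSubst (xDivOneAddX R) := HasSubst.of_constantCoeff_zero' constantCoeff_xDivOneAddX
  conv_lhs => rw [hQ_trunc]
  rw [subst_coe hS, Polynomial.aeval_eq_sum_range' (natDegree_trunc_lt Q n), mul_sum, map_sum]
  refine sum_congr rfl fun j hj => ?_
  have hjn : j ≤ n := Nat.lt_succ_iff.mp (mem_range.mp hj)
  have hsplit : (1 + X : R⟦X⟧) ^ n * xDivOneAddX R ^ j = (1 + X) ^ (n - j) * X ^ j := by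
    rw [← Nat.sub_add_cancel hjn, pow_add, Nat.add_sub_cancel, mul_assoc, ← mul_pow,
      mul_comm _ (xDivOneAddX R), xDivOneAddX_mul_one_add_X]
  rw [mul_smul_comm, coeff_smul, hsplit, coeff_mul_X_pow', if_pos hjn, coeff_self_one_add_X_pow,
    smul_eq_mul, mul_one, coeff_trunc, if_pos (mem_range.mp hj)]

end PowerSeries

section Exp

variable {B : Type*} [CommRing B] [Algebra ℚ B]

theorem expPS_eq_subst_exp {p : B⟦X⟧} (hp : constantCoeff p = 0) : expPS p = (exp B).subst p := by
  ext k
  rw [expPS, coeff_mk, coeff_subst_eq_sum hp]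
  refine sum_congr rfl fun m _ => ?_
  rw [coeff_exp, Algebra.smul_def, one_div]

theorem constantCoeff_expPS (p : B⟦X⟧) : constantCoeff (expPS p) = 1 := by
  rw [← coeff_zero_eq_constantCoeff_apply, expPS, coeff_mk]
  simp

theorem derivative_expPS {p : B⟦X⟧} (hp : constantCoeff p = 0) :
    d⁄dX B (expPS p) = expPS p * d⁄dX B p := by
  rw [expPS_eq_subst_exp hp, derivative_subst (HasSubst.of_constantCoeff_zero' hp), derivative_exp]

theorem expPS_add {p q : B⟦X⟧} (hp : constantCoeff p = 0) (hq : constantCoeff q = 0) :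
    expPS (p + q) = expPS p * expPS q := by
  have hpq : constantCoeff (p + q) = 0 := by rw [map_add, hp, hq, add_zero]
  refine eq_of_derivative_eq_mul (w := d⁄dX B (p + q)) (derivative_expPS hpq) ?_ ?_
  · rw [Derivation.leibniz, derivative_expPS hp, derivative_expPS hq, map_add, smul_eq_mul,
      smul_eq_mul]
    ring
  · rw [map_mul, constantCoeff_expPS, constantCoeff_expPS, constantCoeff_expPS, one_mul]

theorem expPS_nsmul {p : B⟦X⟧} (hp : constantCoeff p = 0) (n : ℕ) :
    expPS (n • p) = expPS p ^ n := by
  induction n with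
  | zero =>
    rw [zero_smul, pow_zero]
    ext k
    simp [expPS, sum_range_succ', coeff_one]
  | succ n ih => rw [succ_nsmul, expPS_add (by rw [map_nsmul, hp, smul_zero]) hp, ih, pow_succ]

theorem expPS_subst {p s : B⟦X⟧} (hp : constantCoeff p = 0) (hs : constantCoeff s = 0) :
    expPS (p.subst s) = (expPS p).subst s := by
  rw [expPS_eq_subst_exp hp, expPS_eq_subst_exp (constantCoeff_subst_eq_zero hs p hp),
    subst_comp_subst_apply (HasSubst.of_constantCoeff_zero' hp) (HasSubst.of_constantCoeff_zero' hs)]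

theorem eq_of_expPS_eq {p q : B⟦X⟧} (hp : constantCoeff p = 0) (hq : constantCoeff q = 0)
    (h : expPS p = expPS q) : p = q := by
  refine derivative.ext ?_ (hp.trans hq.symm)
  have hunit : IsUnit (expPS p) := isUnit_iff_constantCoeff.mpr (by simp [constantCoeff_expPS])
  refine hunit.mul_left_cancel ?_
  rw [← derivative_expPS hp, h, derivative_expPS hq]

end Exp

section Log

variable {A : Type*} [CommRing A] [Algebra ℚ A]

theorem constantCoeff_logOneAdd (c : A) : constantCoeff (logOneAdd c) = 0 := by
  simp [logOneAdd, ← coeff_zero_eq_constantCoeff_apply]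

theorem coeff_derivative_logOneAdd (c : A) (k : ℕ) :
    coeff k (d⁄dX A (logOneAdd c)) = (-c) ^ k * c := by
  have hk : ((k + 1 : ℕ) : ℚ) ≠ 0 := by positivity
  rw [coeff_derivative, logOneAdd, coeff_mk, Algebra.smul_def, ← Nat.cast_succ,
    ← map_natCast (algebraMap ℚ A), mul_right_comm, ← map_mul, div_mul_cancel₀ _ hk,
    map_pow, map_neg, map_one, neg_pow c, pow_succ, pow_succ, pow_succ]
  ring

theorem one_add_C_mul_X_mul_derivative_logOneAdd (c : A) :
    (1 + C c * X) * d⁄dX A (logOneAdd c) = C c := by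
  ext k
  cases k with
  | zero => simpa using coeff_derivative_logOneAdd c 0
  | succ k =>
    simp only [add_mul, one_mul, mul_assoc, map_add, coeff_C_mul, coeff_succ_X_mul, coeff_succ_C,
      coeff_derivative_logOneAdd, pow_succ]
    ring

theorem expPS_logOneAdd (c : A) : expPS (logOneAdd c) = 1 + C c * X := by
  refine eq_of_derivative_eq_mul (derivative_expPS (constantCoeff_logOneAdd c)) ?_ ?_
  · rw [one_add_C_mul_X_mul_derivative_logOneAdd]
    simp
  · simp [constantCoeff_expPS]

theorem logOneAdd_eq_add_subst (a : A) :
    logOneAdd a = logOneAdd 1 + (logOneAdd (a - 1)).subst (xDivOneAddX A) := by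
  have hS := constantCoeff_xDivOneAddX (R := A)
  have hsubst : constantCoeff ((logOneAdd (a - 1)).subst (xDivOneAddX A)) = 0 :=
    constantCoeff_subst_eq_zero hS _ (constantCoeff_logOneAdd _)
  refine eq_of_expPS_eq (constantCoeff_logOneAdd a)
    (by rw [map_add, constantCoeff_logOneAdd, hsubst, add_zero]) ?_
  rw [expPS_add (constantCoeff_logOneAdd 1) hsubst, expPS_subst (constantCoeff_logOneAdd _) hS,
    expPS_logOneAdd, expPS_logOneAdd, expPS_logOneAdd,
    ← coe_substAlgHom (HasSubst.of_constantCoeff_zero' hS), map_add, map_one, map_mul,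
    substAlgHom_X, ← algebraMap_eq, AlgHom.commutes, algebraMap_eq, map_one, one_mul, map_sub,
    map_one]
  linear_combination (1 - C a) * xDivOneAddX_mul_one_add_X (R := A)

end Log

section MapCoeff

variable {A B : Type*} [CommRing A] [CommRing B] [Algebra ℚ A] [Algebra ℚ B] (f : A →ₗ[ℚ] B)

theorem constantCoeff_mapCoeff (p : A⟦X⟧) : constantCoeff (mapCoeff f p) = f (constantCoeff p) := by
  rw [← coeff_zero_eq_constantCoeff_apply, mapCoeff, coeff_mk, coeff_zero_eq_constantCoeff_apply]

theorem mapCoeff_add (p q : A⟦X⟧) : mapCoeff f (p + q) = mapCoeff f p + mapCoeff f q := by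
  ext k
  simp [mapCoeff]

theorem mapCoeff_subst_map_algebraMap {s : ℚ⟦X⟧} (hs : constantCoeff s = 0) (p : A⟦X⟧) :
    mapCoeff f (p.subst (s.map (algebraMap ℚ A))) =
      (mapCoeff f p).subst (s.map (algebraMap ℚ B)) := by
  have hA : constantCoeff (s.map (algebraMap ℚ A)) = 0 := by
    simp [← coeff_zero_eq_constantCoeff_apply, hs]
  have hB : constantCoeff (s.map (algebraMap ℚ B)) = 0 := by
    simp [← coeff_zero_eq_constantCoeff_apply, hs]
  ext k
  rw [mapCoeff, coeff_mk, coeff_subst_eq_sum hA, coeff_subst_eq_sum hB, map_sum]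
  refine sum_congr rfl fun d _ => ?_
  rw [← map_pow, ← map_pow, coeff_map, coeff_map, mapCoeff, coeff_mk, ← Algebra.commutes,
    ← Algebra.smul_def, map_smul, Algebra.smul_def, Algebra.commutes]

theorem mapCoeff_logOneAdd_one {n : ℕ} (hf : f 1 = n • (1 : B)) :
    mapCoeff f (logOneAdd 1) = n • logOneAdd 1 := by
  ext k
  rw [map_nsmul, mapCoeff, coeff_mk, logOneAdd, coeff_mk, logOneAdd, coeff_mk, map_smul, one_pow,
    one_pow, hf, smul_comm]

theorem charFun_eq_one_add_X_pow_mul_subst {n : ℕ} (hf : f 1 = n • (1 : B)) (a : A) :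
    charFun f a = (1 + X) ^ n * (charFun f (a - 1)).subst (xDivOneAddX B) := by
  have hS := constantCoeff_xDivOneAddX (R := B)
  have hL : constantCoeff (mapCoeff f (logOneAdd (a - 1))) = 0 := by
    rw [constantCoeff_mapCoeff, constantCoeff_logOneAdd, map_zero]
  have hn : constantCoeff (n • logOneAdd (1 : B)) = 0 := by
    rw [map_nsmul, constantCoeff_logOneAdd, smul_zero]
  rw [charFun, charFun, logOneAdd_eq_add_subst a, mapCoeff_add, mapCoeff_logOneAdd_one f hf,
    ← map_xDivOneAddX (algebraMap ℚ A), mapCoeff_subst_map_algebraMap f constantCoeff_xDivOneAddX,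
    map_xDivOneAddX, expPS_add hn (constantCoeff_subst_eq_zero hS _ hL),
    expPS_nsmul (constantCoeff_logOneAdd 1), expPS_logOneAdd, map_one, one_mul, expPS_subst hL hS]

end MapCoeff

/-- for an `n`-homomorphism `f`, the `f`-Berezinian
`ber_f(a) = Σ_{k=0}^{n} ψ_k(f, a−1)` equals `ψ_n(f,a)`. -/
theorem stmt9 {A B : Type*} [CommRing A] [CommRing B] [Algebra ℚ A] [Algebra ℚ B]
    (f : A →ₗ[ℚ] B) (n : ℕ) (hf : IsNHom f n) (a : A) :
    ∑ k ∈ Finset.range (n + 1), psi f (a - 1) k = psi f a n := by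
  obtain ⟨hf1, hvanish⟩ := hf
  rw [psi, charFun_eq_one_add_X_pow_mul_subst f hf1 a,
    coeff_one_add_X_pow_mul_subst_xDivOneAddX fun j hj => hvanish j hj (a - 1)]
  rfl
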